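/- Weighted generalized derivative of the eigenfunctions at $0$: Let $0\leq\alpha<2$, $\alpha+\beta<1$, $\mu<\mu(\alpha+\beta):=(1-\alpha-\beta)^2/4$, $\kappa_\alpha=(2-\alpha)/2$, $\nu=\sqrt{\mu(\alpha+\beta)-\mu}/\kappa_\alpha$, $\gamma=\sqrt{\mu(\alpha+\beta)}-\sqrt{\mu(\alpha+\beta)-\mu}$, and $\Phi_k(x)=\frac{(2\kappa_\alpha)^{1/2}}{|J_\nu'(j_{\nu,k})|}x^{(1-\alpha-\beta)/2}J_\nu(j_{\nu,k}x^{\kappa_\alpha})$. Then $$\lim_{x\to 0^+}x^{\alpha+\beta+\gamma}\Phi_k'(x)=\frac{(2\kappa_\alpha)^{1/2}(\sqrt{\mu(\alpha+\beta)}+\kappa_\alpha\nu)\,j_{\nu,k}^{\nu}}{2^{\nu}\Gamma(\nu+1)\,|J_\nu'(j_{\nu,k})|}.$$ -/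
import Mathlib


open MeasureTheory Set

/-- Bessel function of the first kind (real argument, via its power series). -/
noncomputable def besselJ (ν x : ℝ) : ℝ :=
  ∑' m : ℕ, ((-1 : ℝ) ^ m / ((m.factorial : ℝ) * Real.Gamma ((m : ℝ) + ν + 1))) *
    (x / 2) ^ (2 * (m : ℝ) + ν)

namespace BesselAux

/-- Coefficients of the even power series `F ν` with `J_ν(x) = (x/2)^ν F ν x`. -/
noncomputable def e (ν : ℝ) (m : ℕ) : ℝ :=
  (-1 : ℝ) ^ m / ((m.factorial : ℝ) * Real.Gamma ((m : ℝ) + ν + 1) * 4 ^ m)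

noncomputable def d (ν : ℝ) (n : ℕ) : ℝ := if Even n then e ν (n / 2) else 0

noncomputable def F (ν : ℝ) : ℝ → ℝ := FormalMultilinearSeries.ofScalarsSum (d ν)

lemma gamma_pos {ν : ℝ} (hν : 0 < ν) (m : ℕ) : 0 < Real.Gamma ((m : ℝ) + ν + 1) :=
  Real.Gamma_pos_of_pos (by positivity)

lemma gamma_ge {ν : ℝ} (hν : 0 < ν) (m : ℕ) :
    (m.factorial : ℝ) * Real.Gamma (ν + 1) ≤ Real.Gamma ((m : ℝ) + ν + 1) := by
  induction m with
  | zero => simp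
  | succ m ih =>
      have h1 : ((m + 1 : ℕ) : ℝ) + ν + 1 = ((m : ℝ) + ν + 1) + 1 := by push_cast; ring
      have h2 : Real.Gamma (((m : ℝ) + ν + 1) + 1) = ((m : ℝ) + ν + 1) *
          Real.Gamma ((m : ℝ) + ν + 1) := Real.Gamma_add_one (by positivity)
      have h3 : ((m + 1 : ℕ) : ℝ) * (m.factorial : ℝ) = ((m + 1).factorial : ℝ) := by
        rw [Nat.factorial_succ]; push_cast; ring
      have hm1 : ((m : ℝ) + 1) ≤ (m : ℝ) + ν + 1 := by linarith
      have hΓ : 0 < Real.Gamma (ν + 1) := Real.Gamma_pos_of_pos (by linarith)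
      calc ((m + 1).factorial : ℝ) * Real.Gamma (ν + 1)
          = ((m : ℝ) + 1) * ((m.factorial : ℝ) * Real.Gamma (ν + 1)) := by
            rw [← h3]; push_cast; ring
        _ ≤ ((m : ℝ) + ν + 1) * Real.Gamma ((m : ℝ) + ν + 1) := by
            apply mul_le_mul hm1 ih (by positivity)
            positivity
        _ = Real.Gamma (((m + 1 : ℕ) : ℝ) + ν + 1) := by rw [h1, h2]

lemma abs_e {ν : ℝ} (hν : 0 < ν) (m : ℕ) :
    |e ν m| = ((m.factorial : ℝ) * Real.Gamma ((m : ℝ) + ν + 1) * 4 ^ m)⁻¹ := by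
  have h : (0:ℝ) < (m.factorial : ℝ) * Real.Gamma ((m : ℝ) + ν + 1) * 4 ^ m := by
    have := gamma_pos hν m
    positivity
  rw [e, abs_div, abs_pow, abs_neg, abs_one, one_pow, abs_of_pos h, one_div]

lemma radius_top {ν : ℝ} (hν : 0 < ν) :
    (FormalMultilinearSeries.ofScalars ℝ (d ν)).radius = ⊤ := by
  apply FormalMultilinearSeries.radius_eq_top_of_summable_norm
  intro r
  have hnorm : ∀ n, ‖FormalMultilinearSeries.ofScalars ℝ (d ν) n‖ = |d ν n| := by
    intro n
    rw [FormalMultilinearSeries.ofScalars_norm, Real.norm_eq_abs]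
  have hinj : Function.Injective (fun m : ℕ => 2 * m) := fun a b h => by
    dsimp only at h; omega
  rw [show (fun n => ‖FormalMultilinearSeries.ofScalars ℝ (d ν) n‖ * (r:ℝ) ^ n)
      = (fun n => |d ν n| * (r:ℝ) ^ n) from funext fun n => by rw [hnorm]]
  have hside : ∀ n ∉ Set.range (fun m : ℕ => 2 * m), |d ν n| * (r:ℝ) ^ n = 0 := by
    intro n hn
    have hne : ¬ Even n := by
      intro ⟨k, hk⟩
      exact hn ⟨k, show 2 * k = n by omega⟩
    simp [d, hne]
  have hΓ : 0 < Real.Gamma (ν + 1) := Real.Gamma_pos_of_pos (by linarith)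
  have hbound : ∀ m : ℕ, |d ν (2 * m)| * (r:ℝ) ^ (2 * m) ≤
      ((r:ℝ)^2) ^ m / (m.factorial : ℝ) * (Real.Gamma (ν+1))⁻¹ := by
    intro m
    have hd : d ν (2 * m) = e ν m := by simp [d, Nat.mul_div_cancel_left m]
    have h4 : (1:ℝ) ≤ 4 ^ m := one_le_pow₀ (by norm_num)
    have hfac : (1:ℝ) ≤ (m.factorial : ℝ) := by exact_mod_cast m.factorial_pos
    have hge := gamma_ge hν m
    have hΓm := gamma_pos hν m
    rw [hd, abs_e hν]
    have h14 : (1:ℝ) ≤ (m.factorial : ℝ) * 4 ^ m := by nlinarith [hfac, h4]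
    have hle : (m.factorial : ℝ) * Real.Gamma (ν + 1) ≤
        (m.factorial : ℝ) * Real.Gamma ((m : ℝ) + ν + 1) * 4 ^ m := by
      nlinarith [hΓ, hΓm, hge, h14]
    calc ((m.factorial : ℝ) * Real.Gamma ((m : ℝ) + ν + 1) * 4 ^ m)⁻¹ * (r:ℝ) ^ (2 * m)
        ≤ ((m.factorial : ℝ) * Real.Gamma (ν + 1))⁻¹ * (r:ℝ) ^ (2 * m) := by
          have h0 : (0:ℝ) < (m.factorial : ℝ) * Real.Gamma (ν + 1) :=
            mul_pos (by exact_mod_cast m.factorial_pos) hΓ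
          exact mul_le_mul_of_nonneg_right (inv_anti₀ h0 hle) (by positivity)
      _ = ((r:ℝ)^2) ^ m / (m.factorial : ℝ) * (Real.Gamma (ν+1))⁻¹ := by
          rw [pow_mul, mul_inv, div_eq_mul_inv]; ring
  have hcomp : Summable ((fun n => |d ν n| * (r:ℝ) ^ n) ∘ (fun m : ℕ => 2 * m)) := by
    apply Summable.of_nonneg_of_le (fun m => by positivity) (fun m => hbound m)
    exact (Real.summable_pow_div_factorial ((r:ℝ)^2)).mul_right _
  exact (hinj.summable_iff hside).mp hcomp

lemma hasSeries {ν : ℝ} (hν : 0 < ν) : HasFPowerSeriesOnBall (F ν)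
    (FormalMultilinearSeries.ofScalars ℝ (d ν)) 0 ⊤ := by
  have h := (FormalMultilinearSeries.ofScalars ℝ (d ν)).hasFPowerSeriesOnBall
    (by rw [radius_top hν]; exact ENNReal.zero_lt_top)
  rwa [radius_top hν] at h

lemma analyticAt {ν : ℝ} (hν : 0 < ν) (t : ℝ) : AnalyticAt ℝ (F ν) t :=
  (hasSeries hν).analyticAt_of_mem (by simp [edist_lt_top])

lemma F_diff {ν : ℝ} (hν : 0 < ν) (t : ℝ) : DifferentiableAt ℝ (F ν) t :=
  (analyticAt hν t).differentiableAt

lemma derivF_contAt {ν : ℝ} (hν : 0 < ν) : ContinuousAt (deriv (F ν)) 0 := by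
  have h : AnalyticOnNhd ℝ (F ν) Set.univ := fun t _ => analyticAt hν t
  exact ((h.deriv 0 trivial).continuousAt)

lemma F_zero {ν : ℝ} (hν : 0 < ν) : F ν 0 = (Real.Gamma (ν + 1))⁻¹ := by
  have h : F ν 0 = d ν 0 • (1:ℝ) := FormalMultilinearSeries.ofScalarsSum_zero (d ν)
  rw [h, smul_eq_mul, mul_one]
  simp [d, e, one_div]

lemma F_contAt {ν : ℝ} (hν : 0 < ν) : ContinuousAt (F ν) 0 :=
  (analyticAt hν 0).continuousAt

lemma besselJ_eq {ν : ℝ} (hν : 0 < ν) {x : ℝ} (hx : 0 < x) :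
    besselJ ν x = (x / 2) ^ ν * F ν x := by
  have hx2 : (0:ℝ) < x / 2 := by linarith
  have hterm : ∀ m : ℕ,
      ((-1 : ℝ) ^ m / ((m.factorial : ℝ) * Real.Gamma ((m : ℝ) + ν + 1))) *
        (x / 2) ^ (2 * (m : ℝ) + ν)
      = (x / 2) ^ ν * (d ν (2 * m) * x ^ (2 * m)) := by
    intro m
    have hd : d ν (2 * m) = e ν m := by simp [d, Nat.mul_div_cancel_left m]
    have h1 : (x / 2 : ℝ) ^ (2 * (m : ℝ) + ν) = (x / 2) ^ (2 * m : ℕ) * (x / 2) ^ ν := by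
      rw [Real.rpow_add hx2, show (2 * (m : ℝ)) = ((2 * m : ℕ) : ℝ) by push_cast; ring,
        Real.rpow_natCast]
    rw [h1, hd]
    have h2 : ((x / 2 : ℝ)) ^ (2 * m : ℕ) = x ^ (2 * m) / 4 ^ m := by
      rw [div_pow, pow_mul x, pow_mul 2]; norm_num
    rw [h2, e]
    have hΓm := gamma_pos hν m
    have hfac : (0:ℝ) < (m.factorial : ℝ) := by exact_mod_cast m.factorial_pos
    field_simp
  rw [besselJ, tsum_congr hterm, tsum_mul_left]
  congr 1
  have hF : F ν x = ∑' n, d ν n • x ^ n := FormalMultilinearSeries.ofScalars_sum_eq (d ν) x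
  have hinj : Function.Injective (fun m : ℕ => 2 * m) := fun a b h => by
    dsimp only at h; omega
  have hsupp : Function.support (fun n => d ν n * x ^ n) ⊆ Set.range (fun m : ℕ => 2 * m) := by
    intro n hn
    by_contra hr
    have hne : ¬ Even n := by
      intro ⟨k, hk⟩
      exact hr ⟨k, show 2 * k = n by omega⟩
    apply hn
    simp [d, hne]
  have := Function.Injective.tsum_eq hinj (f := fun n => d ν n * x ^ n) hsupp
  rw [hF]
  simp only [smul_eq_mul]
  exact this

end BesselAux

open BesselAux in
theorem stmt18 (α β μ : ℝ) (hα : 0 ≤ α) (hα2 : α < 2) (hαβ : α + β < 1)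
    (hμ : μ < (1 - α - β)^2 / 4) (κ ν γ : ℝ) (hκ : κ = (2 - α)/2)
    (hν : ν = Real.sqrt ((1 - α - β)^2 / 4 - μ) / κ)
    (hγ : γ = Real.sqrt ((1 - α - β)^2 / 4) - Real.sqrt ((1 - α - β)^2 / 4 - μ))
    (j : ℝ) (hj : 0 < j) (hjz : besselJ ν j = 0) :
    Filter.Tendsto
      (fun x : ℝ => x ^ (α + β + γ) *
        deriv (fun s : ℝ => Real.sqrt (2 * κ) / |deriv (besselJ ν) j| *
          s ^ ((1 - α - β)/2) * besselJ ν (j * s ^ κ)) x)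
      (nhdsWithin 0 (Set.Ioi 0))
      (nhds (Real.sqrt (2 * κ) * (Real.sqrt ((1 - α - β)^2 / 4) + κ * ν) * j ^ ν /
        ((2:ℝ) ^ ν * Real.Gamma (ν + 1) * |deriv (besselJ ν) j|))) := by
  have hκpos : 0 < κ := by rw [hκ]; linarith
  set p : ℝ := (1 - α - β) / 2 with hp_def
  have hppos : 0 < p := by rw [hp_def]; linarith
  have hsub : 0 < (1 - α - β)^2 / 4 - μ := by linarith
  set σ : ℝ := Real.sqrt ((1 - α - β)^2 / 4 - μ) with hσ_def
  have hσpos : 0 < σ := Real.sqrt_pos.2 hsub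
  have hνpos : 0 < ν := by rw [hν]; exact div_pos hσpos hκpos
  have hκν : κ * ν = σ := by rw [hν]; field_simp
  have hsqrt : Real.sqrt ((1 - α - β)^2 / 4) = p := by
    rw [show (1 - α - β)^2 / 4 = p^2 by rw [hp_def]; ring]
    exact Real.sqrt_sq hppos.le
  have hγ' : γ = p - σ := by rw [hγ, hsqrt, hσ_def]
  set C : ℝ := Real.sqrt (2 * κ) / |deriv (besselJ ν) j| with hC_def
  set A : ℝ := C * (j / 2) ^ ν with hA_def
  -- key pointwise identity
  have key : ∀ x ∈ Set.Ioi (0:ℝ), x ^ (α + β + γ) *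
      deriv (fun s : ℝ => C * s ^ ((1 - α - β)/2) * besselJ ν (j * s ^ κ)) x
      = A * ((p + σ) * F ν (j * x ^ κ) + (j * κ * x ^ κ) * deriv (F ν) (j * x ^ κ)) := by
    intro x hx
    simp only [Set.mem_Ioi] at hx
    have hxne : x ≠ 0 := hx.ne'
    -- the two functions agree near x
    have hev : (fun s : ℝ => C * s ^ ((1 - α - β)/2) * besselJ ν (j * s ^ κ))
        =ᶠ[nhds x] (fun s : ℝ => A * (s ^ (p + σ) * F ν (j * s ^ κ))) := by
      filter_upwards [isOpen_Ioi.mem_nhds (show x ∈ Set.Ioi (0:ℝ) from hx)] with s hs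
      simp only [Set.mem_Ioi] at hs
      have hsκ : 0 < s ^ κ := Real.rpow_pos_of_pos hs κ
      have hjs : 0 < j * s ^ κ := mul_pos hj hsκ
      rw [besselJ_eq hνpos hjs]
      have h1 : (j * s ^ κ / 2 : ℝ) ^ ν = (j / 2) ^ ν * s ^ (κ * ν) := by
        rw [show j * s ^ κ / 2 = (j / 2) * s ^ κ by ring,
          Real.mul_rpow (by positivity) hsκ.le, ← Real.rpow_mul hs.le]
      have h2 : s ^ (p + σ) = s ^ p * s ^ σ := Real.rpow_add hs p σ
      rw [h1, hκν, h2, hA_def, hp_def]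
      ring
    -- derivative of the nice form
    have h1 : HasDerivAt (fun s : ℝ => s ^ (p + σ)) ((p + σ) * x ^ (p + σ - 1)) x :=
      Real.hasDerivAt_rpow_const (Or.inl hxne)
    have h2 : HasDerivAt (fun s : ℝ => j * s ^ κ) (j * (κ * x ^ (κ - 1))) x :=
      (Real.hasDerivAt_rpow_const (p := κ) (Or.inl hxne)).const_mul j
    have h3 : HasDerivAt (F ν) (deriv (F ν) (j * x ^ κ)) (j * x ^ κ) :=
      (F_diff hνpos _).hasDerivAt
    have h4 : HasDerivAt (fun s : ℝ => F ν (j * s ^ κ))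
        (deriv (F ν) (j * x ^ κ) * (j * (κ * x ^ (κ - 1)))) x := h3.comp x h2
    have h5 : HasDerivAt (fun s : ℝ => s ^ (p + σ) * F ν (j * s ^ κ))
        ((p + σ) * x ^ (p + σ - 1) * F ν (j * x ^ κ) +
          x ^ (p + σ) * (deriv (F ν) (j * x ^ κ) * (j * (κ * x ^ (κ - 1))))) x := h1.mul h4
    have h6 := h5.const_mul A
    have hderiv : deriv (fun s : ℝ => C * s ^ ((1 - α - β)/2) * besselJ ν (j * s ^ κ)) x
        = A * ((p + σ) * x ^ (p + σ - 1) * F ν (j * x ^ κ) +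
          x ^ (p + σ) * (deriv (F ν) (j * x ^ κ) * (j * (κ * x ^ (κ - 1))))) := by
      rw [hev.deriv_eq]
      exact h6.deriv
    rw [hderiv]
    have E1 : x ^ (α + β + γ) * x ^ (p + σ - 1) = 1 := by
      rw [← Real.rpow_add hx, show α + β + γ + (p + σ - 1) = 0 by
        rw [hγ', hp_def]; ring]
      exact Real.rpow_zero x
    have E2 : x ^ (α + β + γ) * (x ^ (p + σ) * x ^ (κ - 1)) = x ^ κ := by
      rw [← Real.rpow_add hx, ← Real.rpow_add hx, show α + β + γ + (p + σ + (κ - 1)) = κ by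
        rw [hγ', hp_def]; ring]
    linear_combination (A * (p + σ) * F ν (j * x ^ κ)) * E1 +
      (A * deriv (F ν) (j * x ^ κ) * j * κ) * E2
  -- limits
  have hxκ : Filter.Tendsto (fun x : ℝ => x ^ κ) (nhdsWithin 0 (Set.Ioi 0)) (nhds 0) := by
    have h := (Real.continuousAt_rpow_const 0 κ (Or.inr hκpos.le)).tendsto
    rw [Real.zero_rpow hκpos.ne'] at h
    exact h.mono_left nhdsWithin_le_nhds
  have hjxκ : Filter.Tendsto (fun x : ℝ => j * x ^ κ) (nhdsWithin 0 (Set.Ioi 0)) (nhds 0) := by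
    have h := hxκ.const_mul j
    simpa using h
  have hlim : Filter.Tendsto
      (fun x : ℝ => A * ((p + σ) * F ν (j * x ^ κ) + (j * κ * x ^ κ) * deriv (F ν) (j * x ^ κ)))
      (nhdsWithin 0 (Set.Ioi 0))
      (nhds (A * ((p + σ) * F ν 0 + (j * κ * 0) * deriv (F ν) 0))) := by
    apply Filter.Tendsto.const_mul
    apply Filter.Tendsto.add
    · exact (((F_contAt hνpos).tendsto.comp hjxκ)).const_mul _
    · have h1 : Filter.Tendsto (fun x : ℝ => j * κ * x ^ κ) (nhdsWithin 0 (Set.Ioi 0))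
          (nhds (j * κ * 0)) := hxκ.const_mul (j * κ)
      exact h1.mul ((derivF_contAt hνpos).tendsto.comp hjxκ)
  have hval : A * ((p + σ) * F ν 0 + (j * κ * 0) * deriv (F ν) 0)
      = Real.sqrt (2 * κ) * (Real.sqrt ((1 - α - β)^2 / 4) + κ * ν) * j ^ ν /
        ((2:ℝ) ^ ν * Real.Gamma (ν + 1) * |deriv (besselJ ν) j|) := by
    rw [F_zero hνpos, hsqrt, hκν, hA_def, hC_def,
      Real.div_rpow hj.le (by norm_num : (0:ℝ) ≤ 2)]
    ring
  rw [← hval]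
  apply hlim.congr'
  filter_upwards [self_mem_nhdsWithin] with x hx
  exact (key x hx).symm
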